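/- Let ι be a finite index set of mesh cells, m : ι → ℝ with m K > 0 for each K, T : ι → ι → ℝ symmetric with T K L ≥ 0 and T K K = 0, b : ι → ℝ with b K ≥ 0, a : ι → ℝ with a K ≥ 0 for all K, Δt > 0 and p > 0. If (y0, y1) is a scheme step, then for every cell K: |y1 K|² ≤ (Σ_L m L·|y0 L|²)/(m K); in particular the maximum norm max_K |y1 K| of the new iterate is bounded by a constant depending only on the initial discrete mass and on min_K m K. -/

import Mathlib

/-!
Multiply the `K`-th equation by the conjugate of the Crank–Nicolson midpoint `(y1 K + y0 K) / 2`
and take imaginary parts. The time difference yields `m K / Δt` times half the change of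
`|y K|²`; the boundary and nonlinear terms are real multiples of `|midpoint|²` and drop out; the
damping term contributes `m K * a K * |midpoint|² ≥ 0`; the exchange terms are antisymmetric in
`(K, L)` because `T` is symmetric, so they cancel after summing over `K`. Hence the discrete mass
`∑ m K |y K|²` does not increase, and a single cell carries at most all of it.
-/

open Complex ComplexConjugate Finset

theorem Finset.sum_sum_eq_zero_of_antisymm {ι M : Type*} [AddCommGroup M] [IsAddTorsionFree M]
    (s : Finset ι) (f : ι → ι → M) (hf : ∀ i j, f i j = -f j i) :
    ∑ i ∈ s, ∑ j ∈ s, f i j = 0 := by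
  refine self_eq_neg.mp ?_
  conv_rhs => rw [sum_comm]
  simp only [← sum_neg_distrib, ← hf]

lemma Complex.im_I_mul_sub_mul_conj_midpoint (z w : ℂ) :
    (I * (z - w) * conj ((z + w) / 2)).im = (normSq z - normSq w) / 2 := by
  simp only [map_div₀, map_add, mul_im, mul_re, I_re, sub_re, zero_mul, I_im, sub_im, one_mul,
    zero_sub, neg_sub, div_im, add_im, conj_im, conj_re, re_ofNat, normSq_apply, im_ofNat, neg_zero,
    mul_zero, add_zero, add_re, zero_div, sub_zero, zero_add, div_re]
  ring

lemma Complex.im_ofReal_mul_mul_conj_self (r : ℝ) (z : ℂ) : ((r : ℂ) * z * conj z).im = 0 := by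
  rw [mul_assoc, mul_conj, ← ofReal_mul, ofReal_im]

lemma Complex.im_I_mul_ofReal_mul_mul_conj_self (r : ℝ) (z : ℂ) :
    (I * r * z * conj z).im = r * normSq z := by
  rw [mul_assoc, mul_assoc, mul_conj, ← ofReal_mul, I_mul_im, ofReal_re]

lemma sum_im_sum_mul_sub_mul_conj_eq_zero {ι : Type*} [Fintype ι] (T : ι → ι → ℝ)
    (hT : ∀ K L, T K L = T L K) (w : ι → ℂ) :
    ∑ K, (∑ L, (T K L : ℂ) * (w L - w K) * conj (w K)).im = 0 := by
  have hterm : ∀ K L, ((T K L : ℂ) * (w L - w K) * conj (w K)).im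
      = T K L * ((w L).im * (w K).re - (w L).re * (w K).im) := fun K L => by
    simp only [mul_im, mul_re, ofReal_re, sub_re, ofReal_im, sub_im, zero_mul, sub_zero, conj_im,
      mul_neg, add_zero, conj_re]
    ring
  simp only [im_sum, hterm]
  exact sum_sum_eq_zero_of_antisymm _ _ fun K L => by rw [hT]; ring

theorem sum_mul_normSq_le_of_crankNicolson_step {ι : Type*} [Fintype ι] (m : ι → ℝ)
    (T : ι → ι → ℝ) (hT : ∀ K L, T K L = T L K) (V a : ι → ℝ) (hma : ∀ K, 0 ≤ m K * a K)
    (Δt : ℝ) (hΔt : 0 < Δt) (y0 y1 : ι → ℂ)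
    (h : ∀ K, I * m K * (y1 K - y0 K) / Δt
      + ∑ L, (T K L : ℂ) * ((y1 L + y0 L) / 2 - (y1 K + y0 K) / 2)
      + V K * ((y1 K + y0 K) / 2) + I * (m K * a K : ℝ) * ((y1 K + y0 K) / 2) = 0) :
    ∑ K, m K * normSq (y1 K) ≤ ∑ K, m K * normSq (y0 K) := by
  have hcell : ∀ K, m K / Δt * ((normSq (y1 K) - normSq (y0 K)) / 2)
      + (∑ L, (T K L : ℂ) * ((y1 L + y0 L) / 2 - (y1 K + y0 K) / 2)
          * conj ((y1 K + y0 K) / 2)).im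
      + m K * a K * normSq ((y1 K + y0 K) / 2) = 0 := by
    intro K
    have hI : I * m K * (y1 K - y0 K) / Δt = ((m K / Δt : ℝ) : ℂ) * (I * (y1 K - y0 K)) := by
      push_cast; ring
    have hK := congrArg (fun z => (z * conj ((y1 K + y0 K) / 2)).im) (h K)
    simp only [hI, add_mul, sum_mul, zero_mul, add_im, mul_assoc ((m K / Δt : ℝ) : ℂ),
      im_ofReal_mul, im_I_mul_sub_mul_conj_midpoint, im_ofReal_mul_mul_conj_self,
      im_I_mul_ofReal_mul_mul_conj_self, zero_im] at hK
    linarith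
  have hex := sum_im_sum_mul_sub_mul_conj_eq_zero T hT fun K => (y1 K + y0 K) / 2
  have hdamp : 0 ≤ ∑ K, m K * a K * normSq ((y1 K + y0 K) / 2) :=
    sum_nonneg fun K _ => mul_nonneg (hma K) (normSq_nonneg _)
  have hrate : ∑ K, m K / Δt * ((normSq (y1 K) - normSq (y0 K)) / 2)
      = (∑ K, m K * normSq (y1 K) - ∑ K, m K * normSq (y0 K)) / (2 * Δt) := by
    rw [← sum_sub_distrib, sum_div]
    exact sum_congr rfl fun K _ => by ring
  have hbalance := sum_eq_zero (s := univ) fun K _ => hcell K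
  rw [sum_add_distrib, sum_add_distrib, hex, hrate] at hbalance
  have hsign : (∑ K, m K * normSq (y1 K) - ∑ K, m K * normSq (y0 K)) / (2 * Δt) ≤ 0 := by
    linarith
  rw [div_le_iff₀ (by positivity), zero_mul] at hsign
  linarith

theorem discrete_linfty_bound_general {ι : Type*} [Fintype ι]
    (m : ι → ℝ) (hm : ∀ K, 0 < m K)
    (T : ι → ι → ℝ) (hTsymm : ∀ K L, T K L = T L K)
    (b : ι → ℝ)
    (a : ι → ℝ) (ha : ∀ K, 0 ≤ a K)
    (Δt : ℝ) (hΔt : 0 < Δt) (p : ℝ)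
    (y0 y1 : ι → ℂ)
    (hscheme : ∀ K : ι,
      Complex.I * (m K : ℂ) * (y1 K - y0 K) / (Δt : ℂ)
        + ∑ L : ι, (T K L : ℂ) * ((y1 L + y0 L) / 2 - (y1 K + y0 K) / 2)
        - (b K : ℂ) * (y1 K + y0 K) / 2
        - ((m K / (2 * p) : ℝ) : ℂ)
            * (((‖y1 K‖ ^ (2 * p) - ‖y0 K‖ ^ (2 * p)) /
                (‖y1 K‖ ^ 2 - ‖y0 K‖ ^ 2) : ℝ) : ℂ)
            * (y1 K + y0 K)
        + Complex.I * (m K : ℂ) * (a K : ℂ) * (y1 K + y0 K) / 2 = 0) :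
    ∀ K : ι, ‖y1 K‖ ^ 2 ≤ (∑ L : ι, m L * ‖y0 L‖ ^ 2) / m K := by
  have hmass := sum_mul_normSq_le_of_crankNicolson_step m T hTsymm
    (fun K => -b K - 2 * (m K / (2 * p)) *
      ((‖y1 K‖ ^ (2 * p) - ‖y0 K‖ ^ (2 * p)) / (‖y1 K‖ ^ 2 - ‖y0 K‖ ^ 2)))
    a (fun K => mul_nonneg (hm K).le (ha K)) Δt hΔt y0 y1 fun K => by
      simp only [ofReal_sub, ofReal_neg, ofReal_mul, ofReal_ofNat]
      linear_combination hscheme K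
  intro K
  rw [le_div_iff₀ (hm K), mul_comm]
  simp only [Complex.sq_norm]
  calc m K * normSq (y1 K) ≤ ∑ L, m L * normSq (y1 L) :=
        single_le_sum (fun L _ => mul_nonneg (hm L).le (normSq_nonneg _)) (mem_univ K)
    _ ≤ ∑ L, m L * normSq (y0 L) := hmass

/-- Uniform (maximum-norm) bound for the new iterate of the finite-volume
scheme for the damped defocusing NLS, in terms of the initial discrete mass
and the cell areas. -/
theorem discrete_linfty_bound {ι : Type*} [Fintype ι]
    (m : ι → ℝ) (hm : ∀ K, 0 < m K)
    (T : ι → ι → ℝ) (hTsymm : ∀ K L, T K L = T L K)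
    (hTnonneg : ∀ K L, 0 ≤ T K L) (hTdiag : ∀ K, T K K = 0)
    (b : ι → ℝ) (hb : ∀ K, 0 ≤ b K)
    (a : ι → ℝ) (ha : ∀ K, 0 ≤ a K)
    (Δt : ℝ) (hΔt : 0 < Δt) (p : ℝ) (hp : 0 < p)
    (y0 y1 : ι → ℂ)
    (hscheme : ∀ K : ι,
      Complex.I * (m K : ℂ) * (y1 K - y0 K) / (Δt : ℂ)
        + ∑ L : ι, (T K L : ℂ) * ((y1 L + y0 L) / 2 - (y1 K + y0 K) / 2)
        - (b K : ℂ) * (y1 K + y0 K) / 2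
        - ((m K / (2 * p) : ℝ) : ℂ)
            * (((‖y1 K‖ ^ (2 * p) - ‖y0 K‖ ^ (2 * p)) /
                (‖y1 K‖ ^ 2 - ‖y0 K‖ ^ 2) : ℝ) : ℂ)
            * (y1 K + y0 K)
        + Complex.I * (m K : ℂ) * (a K : ℂ) * (y1 K + y0 K) / 2 = 0) :
    ∀ K : ι, ‖y1 K‖ ^ 2 ≤ (∑ L : ι, m L * ‖y0 L‖ ^ 2) / m K :=
  discrete_linfty_bound_general m hm T hTsymm b a ha Δt hΔt p y0 y1 hscheme
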